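/- Let α > 1 and let p and q be joint probability distributions on finite alphabets X × Y such that for every y ∈ Y the column vector (q(x,y))_{x∈X} is majorized by the column vector (p(x,y))_{x∈X}. Then H_α(X|Y)_p ≤ H_α(X|Y)_q. -/

import Mathlib

/-- The sum of the `k` largest entries of a real vector, expressed as the
supremum of sums over subsets of cardinality `k`. -/
noncomputable def kLargestSum {ι : Type*} [Fintype ι] (u : ι → ℝ) (k : ℕ) : ℝ :=
  sSup {s : ℝ | ∃ A : Finset ι, A.card = k ∧ s = ∑ i ∈ A, u i}

/-- `u` is majorized by `v`: for every `k = 1, …, d` the sum of the `k` largest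
entries of `u` is at most that of `v`, with equality of total sums. -/
def Majorized {ι : Type*} [Fintype ι] (u v : ι → ℝ) : Prop :=
  (∀ k : ℕ, 1 ≤ k → k ≤ Fintype.card ι → kLargestSum u k ≤ kLargestSum v k) ∧
    (∑ i, u i) = ∑ i, v i

/-- Arimoto–Rényi conditional entropy of order `α` (base-2 logarithm),
for a joint distribution `p : X → Y → ℝ`. -/
noncomputable def condRenyi {X Y : Type*} [Fintype X] [Fintype Y]
    (α : ℝ) (p : X → Y → ℝ) : ℝ :=
  (α / (1 - α)) * Real.logb 2 (∑ y, (∑ x, p x y ^ α) ^ (1 / α))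

/-! For `α > 1` the prefactor `α / (1 - α)` is negative and `logb 2` is monotone, so it suffices
to compare the column power sums: `∑ x, q x y ^ α ≤ ∑ x, p x y ^ α`. This is Karamata's inequality
for `t ↦ t ^ α`. Sort both columns decreasingly and pair them entrywise; the tangent line of
`t ↦ t ^ α` at each entry of `q` bounds the difference of the powers from below by
`α q_j ^ (α - 1) (p_j - q_j)`, and Abel summation against the decreasing slopes turns this into
a nonnegative combination of the prefix-sum differences `∑_{j ≤ t} (p_j - q_j)`, which are
nonnegative by majorization and vanish for the full sum. -/

open Finset Real

theorem Finset.sum_le_sum_of_card_eq_of_forall_sdiff_le {ι M : Type*} [AddCommMonoid M]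
    [LinearOrder M] [IsOrderedCancelAddMonoid M] [DecidableEq ι] {s t : Finset ι} {f : ι → M}
    (hst : #s = #t) (h : ∀ i ∈ s \ t, ∀ j ∈ t \ s, f i ≤ f j) :
    ∑ i ∈ s, f i ≤ ∑ i ∈ t, f i := by
  rw [← sum_sdiff_le_sum_sdiff]
  rcases (s \ t).eq_empty_or_nonempty with hempty | hne
  · have hts : t \ s = ∅ := by rw [← card_eq_zero, ← card_sdiff_comm hst, hempty, card_empty]
    rw [hempty, hts]
  obtain ⟨i₀, hi₀, hmax⟩ := exists_max_image (s \ t) f hne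
  calc ∑ i ∈ s \ t, f i ≤ #(s \ t) • f i₀ := sum_le_card_nsmul _ _ _ hmax
    _ = #(t \ s) • f i₀ := by rw [card_sdiff_comm hst]
    _ ≤ ∑ j ∈ t \ s, f j := card_nsmul_le_sum _ _ _ fun j hj => h i₀ hi₀ j hj

section AbelSummation

variable {κ R : Type*} [LinearOrder κ] [CommRing R] [LinearOrder R] [IsStrictOrderedRing R]
  {c a : κ → R}

theorem Finset.mul_sum_le_sum_mul_of_antitone (hc : Antitone c) (s : Finset κ)
    (ha : ∀ t ∈ s, 0 ≤ ∑ i ∈ s with i ≤ t, a i) {b : κ} (hb : ∀ i ∈ s, i ≤ b) :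
    c b * ∑ i ∈ s, a i ≤ ∑ i ∈ s, c i * a i := by
  induction s using Finset.induction_on_max generalizing b with
  | empty => simp
  | insert m s hlt ih =>
    have hm : m ∉ s := fun h => (hlt m h).false
    have hs : ∀ t ∈ s, 0 ≤ ∑ i ∈ s with i ≤ t, a i := fun t ht => by
      simpa [filter_insert, not_le.mpr (hlt t ht)] using ha t (mem_insert_of_mem ht)
    have htotal : 0 ≤ ∑ i ∈ insert m s, a i := by
      simpa [filter_true_of_mem fun i hi => (mem_insert.mp hi).elim le_of_eq
        fun h => (hlt i h).le] using ha m (mem_insert_self m s)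
    calc c b * ∑ i ∈ insert m s, a i ≤ c m * ∑ i ∈ insert m s, a i :=
          mul_le_mul_of_nonneg_right (hc (hb m (mem_insert_self m s))) htotal
      _ = c m * a m + c m * ∑ i ∈ s, a i := by rw [sum_insert hm, mul_add]
      _ ≤ c m * a m + ∑ i ∈ s, c i * a i := by gcongr; exact ih hs fun i hi => (hlt i hi).le
      _ = ∑ i ∈ insert m s, c i * a i := by rw [sum_insert hm]

theorem Finset.sum_mul_nonneg_of_antitone (hc : Antitone c) (s : Finset κ)
    (ha : ∀ t ∈ s, 0 ≤ ∑ i ∈ s with i ≤ t, a i) (hsum : ∑ i ∈ s, a i = 0) :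
    0 ≤ ∑ i ∈ s, c i * a i := by
  rcases s.eq_empty_or_nonempty with rfl | hne
  · simp
  · simpa [hsum] using
      s.mul_sum_le_sum_mul_of_antitone hc ha (b := s.max' hne) fun i hi => s.le_max' i hi

end AbelSummation

theorem exists_equiv_antitone_comp {ι β : Type*} [Fintype ι] [LinearOrder β] (u : ι → β) :
    ∃ σ : Fin (Fintype.card ι) ≃ ι, Antitone (u ∘ σ) := by
  let e := (Fintype.equivFin ι).symm
  exact ⟨(Tuple.sort (OrderDual.toDual ∘ u ∘ e)).trans e,
    Tuple.monotone_sort (OrderDual.toDual ∘ u ∘ e)⟩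

theorem sum_le_kLargestSum {ι : Type*} [Fintype ι] (u : ι → ℝ) (A : Finset ι) :
    ∑ i ∈ A, u i ≤ kLargestSum u #A := by
  refine le_csSup (Set.Finite.bddAbove ?_) ⟨A, rfl, rfl⟩
  refine (Set.finite_range fun B : Finset ι => ∑ i ∈ B, u i).subset ?_
  rintro _ ⟨B, -, rfl⟩
  exact ⟨B, rfl⟩

theorem kLargestSum_eq_sum_Iic {ι : Type*} [Fintype ι] {d : ℕ} (σ : Fin d ≃ ι) {u : ι → ℝ}
    (hu : Antitone (u ∘ σ)) (t : Fin d) :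
    kLargestSum u (t + 1) = ∑ j ∈ Iic t, u (σ j) := by
  have hcard : #((Iic t).map σ.toEmbedding) = t + 1 := by rw [card_map, Fin.card_Iic]
  apply le_antisymm
  · refine csSup_le ⟨_, _, hcard, rfl⟩ ?_
    rintro _ ⟨A, hA, rfl⟩
    calc ∑ i ∈ A, u i = ∑ j ∈ A.map σ.symm.toEmbedding, u (σ j) := by simp [sum_map]
      _ ≤ ∑ j ∈ Iic t, u (σ j) := by
        refine sum_le_sum_of_card_eq_of_forall_sdiff_le (by simp [hA]) fun i hi j hj => ?_
        simp only [mem_sdiff, mem_Iic] at hi hj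
        exact hu (hj.1.trans (not_le.mp hi.2).le)
  · simpa only [hcard, sum_map, Equiv.coe_toEmbedding] using
      sum_le_kLargestSum u ((Iic t).map σ.toEmbedding)

theorem Majorized.sum_le_sum_of_subgradient {ι : Type*} [Fintype ι] {u v : ι → ℝ}
    (h : Majorized u v) {s : Set ℝ} {f g : ℝ → ℝ} (hg : MonotoneOn g s)
    (hfg : ∀ x ∈ s, ∀ y ∈ s, f x + g x * (y - x) ≤ f y)
    (hu : ∀ i, u i ∈ s) (hv : ∀ i, v i ∈ s) :
    ∑ i, f (u i) ≤ ∑ i, f (v i) := by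
  obtain ⟨σ, hσ⟩ := exists_equiv_antitone_comp u
  obtain ⟨τ, hτ⟩ := exists_equiv_antitone_comp v
  have hc : Antitone fun j => g (u (σ j)) := fun i j hij => hg (hu _) (hu _) (hσ hij)
  have hprefix : ∀ t ∈ univ, 0 ≤ ∑ j ∈ univ with j ≤ t, (v (τ j) - u (σ j)) := by
    intro t _
    have hk := h.1 (t + 1) (Nat.le_add_left 1 t) t.isLt
    rw [kLargestSum_eq_sum_Iic σ hσ, kLargestSum_eq_sum_Iic τ hτ] at hk
    rw [filter_ge_eq_Iic, sum_sub_distrib]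
    exact sub_nonneg.mpr hk
  have htotal : ∑ j, (v (τ j) - u (σ j)) = 0 := by
    rw [sum_sub_distrib, Equiv.sum_comp τ v, Equiv.sum_comp σ u, h.2, sub_self]
  calc ∑ i, f (u i) = ∑ j, f (u (σ j)) := (Equiv.sum_comp σ (f ∘ u)).symm
    _ ≤ ∑ j, (f (u (σ j)) + g (u (σ j)) * (v (τ j) - u (σ j))) := by
        rw [sum_add_distrib]
        exact le_add_of_nonneg_right (sum_mul_nonneg_of_antitone hc univ hprefix htotal)
    _ ≤ ∑ j, f (v (τ j)) := sum_le_sum fun j _ => hfg _ (hu _) _ (hv _)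
    _ = ∑ i, f (v i) := Equiv.sum_comp τ (f ∘ v)

theorem Real.rpow_add_mul_rpow_sub_one_mul_sub_le {α a b : ℝ} (hα : 1 ≤ α) (ha : 0 ≤ a)
    (hb : 0 ≤ b) : a ^ α + α * a ^ (α - 1) * (b - a) ≤ b ^ α := by
  rcases ha.eq_or_lt with rfl | ha
  · rcases hα.eq_or_lt with rfl | hα
    · simp
    · simp [zero_rpow (by linarith : α ≠ 0), zero_rpow (by linarith : α - 1 ≠ 0),
        rpow_nonneg hb]
  have hbernoulli := one_add_mul_self_le_rpow_one_add (by linarith [div_nonneg hb ha.le] :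
    -1 ≤ b / a - 1) hα
  rw [add_sub_cancel, div_rpow hb ha.le, le_div_iff₀ (rpow_pos_of_pos ha α)] at hbernoulli
  calc a ^ α + α * a ^ (α - 1) * (b - a) = (1 + α * (b / a - 1)) * a ^ α := by
        rw [rpow_sub ha, rpow_one]
        field_simp
    _ ≤ b ^ α := hbernoulli

theorem Majorized.sum_rpow_le {ι : Type*} [Fintype ι] {u v : ι → ℝ} (h : Majorized u v)
    {α : ℝ} (hα : 1 ≤ α) (hu : ∀ i, 0 ≤ u i) (hv : ∀ i, 0 ≤ v i) :
    ∑ i, u i ^ α ≤ ∑ i, v i ^ α :=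
  h.sum_le_sum_of_subgradient (s := Set.Ici 0) (g := fun x => α * x ^ (α - 1))
    (fun x hx y _ hxy =>
      mul_le_mul_of_nonneg_left (rpow_le_rpow hx hxy (by linarith)) (by linarith))
    (fun x hx y hy => rpow_add_mul_rpow_sub_one_mul_sub_le hα hx hy) hu hv

theorem arce_marginally_schur_concave_of_gt_one_general
    {X Y : Type*} [Fintype X] [Fintype Y]
    (α : ℝ) (hα : 1 < α)
    (p q : X → Y → ℝ)
    (hp0 : ∀ x y, 0 ≤ p x y)
    (hq0 : ∀ x y, 0 ≤ q x y) (hq1 : (∑ x, ∑ y, q x y) = 1)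
    (hmaj : ∀ y : Y, Majorized (fun x => q x y) (fun x => p x y)) :
    condRenyi α p ≤ condRenyi α q := by
  have hcol : ∀ y, 0 ≤ ∑ x, q x y ^ α := fun y => sum_nonneg fun x _ => rpow_nonneg (hq0 x y) α
  obtain ⟨x₀, -, hx₀⟩ := exists_lt_of_sum_lt (s := univ) (f := fun _ => (0 : ℝ))
    (g := fun x => ∑ y, q x y) (by simp [hq1])
  obtain ⟨y₀, -, hy₀⟩ := exists_lt_of_sum_lt (f := fun _ => (0 : ℝ)) (by simpa using hx₀)
  have hpos : 0 < ∑ y, (∑ x, q x y ^ α) ^ (1 / α) :=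
    sum_pos' (fun y _ => rpow_nonneg (hcol y) _) ⟨y₀, mem_univ _, rpow_pos_of_pos
      (sum_pos' (fun x _ => rpow_nonneg (hq0 x y₀) α) ⟨x₀, mem_univ _, rpow_pos_of_pos hy₀ α⟩) _⟩
  have hle : ∑ y, (∑ x, q x y ^ α) ^ (1 / α) ≤ ∑ y, (∑ x, p x y ^ α) ^ (1 / α) :=
    sum_le_sum fun y _ => rpow_le_rpow (hcol y)
      ((hmaj y).sum_rpow_le hα.le (hq0 · y) (hp0 · y)) (by positivity)
  exact mul_le_mul_of_nonpos_left (logb_le_logb_of_le one_lt_two hpos hle)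
    (div_nonpos_of_nonneg_of_nonpos (by linarith) (by linarith))

theorem arce_marginally_schur_concave_of_gt_one
    {X Y : Type*} [Fintype X] [Fintype Y]
    (α : ℝ) (hα : 1 < α)
    (p q : X → Y → ℝ)
    (hp0 : ∀ x y, 0 ≤ p x y) (hp1 : (∑ x, ∑ y, p x y) = 1)
    (hq0 : ∀ x y, 0 ≤ q x y) (hq1 : (∑ x, ∑ y, q x y) = 1)
    (hmaj : ∀ y : Y, Majorized (fun x => q x y) (fun x => p x y)) :
    condRenyi α p ≤ condRenyi α q :=
  arce_marginally_schur_concave_of_gt_one_general α hα p q hp0 hq0 hq1 hmaj
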